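/- For the map Γ(f)(t) = f(t) − g_f(t)·e₁ with g_f(t) = sup_{0≤u≤t} (2β − (f₁(u)+f₂(u)))⁻, there is a constant C such that for every f ∈ D([0,T];ℝ²) and every θ ∈ (0,T], the modulus of continuity satisfies w_T(Γ(f), θ) ≤ C · w_T(f, θ), where w_T(h, θ) = sup { ‖h(u) − h(s)‖ : 0 ≤ s < u ≤ s+θ ≤ T }. -/

import Mathlib

noncomputable section

/-- Negative part of a real number: `x⁻ = max (-x) 0`. -/
def negp (x : ℝ) : ℝ := max (-x) 0

/-- The first standard basis vector of `ℝ²`. -/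
def e1 : EuclideanSpace ℝ (Fin 2) := EuclideanSpace.single 0 1

/-- `g_f(t) = sup_{0 ≤ u ≤ t} (2β − (f₁(u) + f₂(u)))⁻`. -/
def gmap (β : ℝ) (f : ℝ → EuclideanSpace ℝ (Fin 2)) (t : ℝ) : ℝ :=
  ⨆ u : Set.Icc (0 : ℝ) t, negp (2 * β - (f u 0 + f u 1))

/-- `Γ(f)(t) = f(t) − g_f(t)·e₁`. -/
def Gam (β : ℝ) (f : ℝ → EuclideanSpace ℝ (Fin 2)) (t : ℝ) : EuclideanSpace ℝ (Fin 2) :=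
  f t - gmap β f t • e1

/-- `f` is càdlàg on `[0, T]`: right-continuous on `[0,T)` and with left limits on `(0,T]`. -/
def IsCadlagOn {E : Type*} [TopologicalSpace E] (f : ℝ → E) (T : ℝ) : Prop :=
  (∀ t ∈ Set.Ico (0 : ℝ) T, ContinuousWithinAt f (Set.Ici t) t) ∧
  (∀ t ∈ Set.Ioc (0 : ℝ) T, ∃ l, Filter.Tendsto f (nhdsWithin t (Set.Iio t)) (nhds l))

/-!
`Γ(f) - f` is `-g_f • e₁`, where `g_f` is the running supremum of `φ ∘ f` for the 2-Lipschitz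
function `φ x = (2β - (x₁ + x₂))⁻`. On a window `(s, u]` the running supremum grows by at most the
largest increment of `φ ∘ f` from time `s`, so `|g_f(u) - g_f(s)| ≤ 2 w_T(f, θ)` and
`w_T(Γ(f), θ) ≤ 3 w_T(f, θ)`. A càdlàg path is bounded on the compact `[0, T]`, which keeps all
these suprema finite.
-/

open Set Filter Topology Bornology Metric

lemma lipschitzWith_negp : LipschitzWith 1 negp :=
  LipschitzWith.id.neg.max_const 0

lemma lipschitzWith_negp_two_mul_sub_coord_sum (β : ℝ) :
    LipschitzWith 2 fun x : EuclideanSpace ℝ (Fin 2) => negp (2 * β - (x 0 + x 1)) := by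
  have hsum : LipschitzWith 2 fun x : EuclideanSpace ℝ (Fin 2) => 2 * β - (x 0 + x 1) := by
    refine LipschitzWith.of_dist_le_mul fun x y => ?_
    rw [Real.dist_eq, dist_eq_norm, abs_sub_comm]
    calc |2 * β - (y 0 + y 1) - (2 * β - (x 0 + x 1))| = |(x - y) 0 + (x - y) 1| := by
          simp only [PiLp.sub_apply]; ring_nf
      _ ≤ ‖(x - y) 0‖ + ‖(x - y) 1‖ := abs_add_le _ _
      _ ≤ ‖x - y‖ + ‖x - y‖ := add_le_add (PiLp.norm_apply_le _ _) (PiLp.norm_apply_le _ _)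
      _ = (2 : NNReal) * ‖x - y‖ := by push_cast; ring
  exact one_mul (2 : NNReal) ▸ lipschitzWith_negp.comp hsum

section Cadlag

variable {E : Type*} [PseudoMetricSpace E] {f : ℝ → E} {T : ℝ}

lemma IsCadlagOn.exists_mem_nhdsWithin_isBounded_image (hf : IsCadlagOn f T) {x : ℝ}
    (hx : x ∈ Icc 0 T) : ∃ t ∈ 𝓝[Icc 0 T] x, IsBounded (f '' t) := by
  have hleft : ∃ l, Tendsto f (𝓝[Icc 0 T ∩ Iio x] x) (𝓝 l) := by
    rcases hx.1.eq_or_lt with rfl | hx0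
    · refine ⟨f 0, ?_⟩
      rw [show Icc 0 T ∩ Iio 0 = ∅ from eq_empty_of_forall_notMem fun y hy => hy.1.1.not_gt hy.2,
        nhdsWithin_empty]
      exact tendsto_bot
    · obtain ⟨l, hl⟩ := hf.2 x ⟨hx0, hx.2⟩
      exact ⟨l, hl.mono_left (nhdsWithin_mono _ inter_subset_right)⟩
  have hright : ContinuousWithinAt f (Icc 0 T ∩ Ici x) x := by
    rcases hx.2.lt_or_eq with hxT | rfl
    · exact (hf.1 x ⟨hx.1, hxT⟩).mono inter_subset_right
    · exact continuousWithinAt_singleton.mono fun y hy => le_antisymm hy.1.2 hy.2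
  obtain ⟨l, hl⟩ := hleft
  obtain ⟨t₁, ht₁, hb₁⟩ := exists_isBounded_image_of_tendsto hl
  obtain ⟨t₂, ht₂, hb₂⟩ := exists_isBounded_image_of_tendsto hright
  refine ⟨t₁ ∪ t₂, ?_, by rw [image_union]; exact hb₁.union hb₂⟩
  rw [← inter_univ (Icc 0 T), ← Iio_union_Ici (a := x), inter_union_distrib_left,
    nhdsWithin_union]
  exact union_mem_sup ht₁ ht₂

lemma IsCadlagOn.isBounded_image (hf : IsCadlagOn f T) : IsBounded (f '' Icc 0 T) :=
  isCompact_Icc.induction_on (p := fun s => IsBounded (f '' s)) (by simp)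
    (fun _ _ hst ht => ht.subset (image_mono hst))
    (fun _ _ hs ht => by rw [image_union]; exact hs.union ht)
    fun _ hx => hf.exists_mem_nhdsWithin_isBounded_image hx

end Cadlag

section Modulus

variable {E : Type*} [SeminormedAddCommGroup E] {h : ℝ → E} {T θ : ℝ}

/-- The modulus of continuity `w_T(h, θ)`. -/
def modulusOfContinuity (h : ℝ → E) (T θ : ℝ) : ℝ :=
  sSup {x : ℝ | ∃ s u : ℝ, 0 ≤ s ∧ s < u ∧ u ≤ s + θ ∧ s + θ ≤ T ∧ x = ‖h u - h s‖}

lemma modulusOfContinuity_nonneg : 0 ≤ modulusOfContinuity h T θ :=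
  Real.sSup_nonneg <| by rintro _ ⟨s, u, -, -, -, -, rfl⟩; exact norm_nonneg _

lemma norm_sub_le_modulusOfContinuity (hb : IsBounded (h '' Icc 0 T)) {s u : ℝ} (hs : 0 ≤ s)
    (hsu : s < u) (hu : u ≤ s + θ) (hθ : s + θ ≤ T) :
    ‖h u - h s‖ ≤ modulusOfContinuity h T θ := by
  refine le_csSup ⟨diam (h '' Icc 0 T), ?_⟩ ⟨s, u, hs, hsu, hu, hθ, rfl⟩
  rintro _ ⟨s', u', hs', hsu', hu', hθ', rfl⟩
  rw [← dist_eq_norm]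
  exact dist_le_diam_of_mem hb (mem_image_of_mem h ⟨by linarith, by linarith⟩)
    (mem_image_of_mem h ⟨hs', by linarith⟩)

lemma modulusOfContinuity_le {c : ℝ} (hc : 0 ≤ c)
    (hle : ∀ s u, 0 ≤ s → s < u → u ≤ s + θ → s + θ ≤ T → ‖h u - h s‖ ≤ c) :
    modulusOfContinuity h T θ ≤ c :=
  Real.sSup_le (by rintro _ ⟨s, u, hs, hsu, hu, hθ, rfl⟩; exact hle s u hs hsu hu hθ) hc

end Modulus

section RunningSup

variable {φ : ℝ → ℝ} {s u c : ℝ}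

lemma iSup_Icc_le_iSup_Icc (hs : 0 ≤ s) (hsu : s ≤ u) (hφ : BddAbove (φ '' Icc 0 u)) :
    ⨆ v : Icc (0 : ℝ) s, φ v ≤ ⨆ v : Icc (0 : ℝ) u, φ v := by
  rw [← sSup_image', ← sSup_image']
  exact csSup_le_csSup hφ ⟨φ 0, mem_image_of_mem φ ⟨le_rfl, hs⟩⟩
    (image_mono (Icc_subset_Icc_right hsu))

lemma iSup_Icc_le_iSup_Icc_add (hs : 0 ≤ s) (hsu : s ≤ u) (hc : 0 ≤ c)
    (hφ : BddAbove (φ '' Icc 0 u)) (hinc : ∀ v ∈ Ioc s u, φ v ≤ φ s + c) :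
    ⨆ v : Icc (0 : ℝ) u, φ v ≤ (⨆ v : Icc (0 : ℝ) s, φ v) + c := by
  have hφs : BddAbove (φ '' Icc 0 s) := hφ.mono (image_mono (Icc_subset_Icc_right hsu))
  have hle : ∀ v ∈ Icc 0 s, φ v ≤ ⨆ v : Icc (0 : ℝ) s, φ v := fun v hv => by
    rw [← sSup_image']
    exact le_csSup hφs (mem_image_of_mem φ hv)
  rw [← sSup_image']
  refine csSup_le ⟨φ 0, mem_image_of_mem φ ⟨le_rfl, hs.trans hsu⟩⟩ ?_
  rintro _ ⟨v, hv, rfl⟩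
  rcases le_or_gt v s with hvs | hsv
  · linarith [hle v ⟨hv.1, hvs⟩]
  · linarith [hinc v ⟨hsv, hv.2⟩, hle s ⟨hs, le_rfl⟩]

lemma abs_iSup_Icc_sub_iSup_Icc_le (hs : 0 ≤ s) (hsu : s ≤ u) (hc : 0 ≤ c)
    (hφ : BddAbove (φ '' Icc 0 u)) (hinc : ∀ v ∈ Ioc s u, φ v ≤ φ s + c) :
    |(⨆ v : Icc (0 : ℝ) u, φ v) - ⨆ v : Icc (0 : ℝ) s, φ v| ≤ c :=
  abs_le.2 ⟨by linarith [iSup_Icc_le_iSup_Icc hs hsu hφ],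
    by linarith [iSup_Icc_le_iSup_Icc_add hs hsu hc hφ hinc]⟩

end RunningSup

lemma abs_gmap_sub_le (β : ℝ) {f : ℝ → EuclideanSpace ℝ (Fin 2)} {s u w : ℝ} (hs : 0 ≤ s)
    (hsu : s ≤ u) (hw : 0 ≤ w) (hb : IsBounded (f '' Icc 0 u))
    (hinc : ∀ v ∈ Ioc s u, ‖f v - f s‖ ≤ w) :
    |gmap β f u - gmap β f s| ≤ 2 * w := by
  have hL := lipschitzWith_negp_two_mul_sub_coord_sum β
  refine abs_iSup_Icc_sub_iSup_Icc_le (φ := fun v => negp (2 * β - (f v 0 + f v 1)))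
    hs hsu (by positivity) ?_ fun v hv => ?_
  · rw [← image_image (g := fun x : EuclideanSpace ℝ (Fin 2) => negp (2 * β - (x 0 + x 1)))]
    exact (hL.isBounded_image hb).bddAbove
  · have hdist := hL.dist_le_mul (f v) (f s)
    rw [Real.dist_eq, dist_eq_norm] at hdist
    push_cast at hdist
    linarith [le_abs_self (negp (2 * β - (f v 0 + f v 1)) - negp (2 * β - (f s 0 + f s 1))),
      hinc v hv]

lemma norm_Gam_sub_le (β : ℝ) {f : ℝ → EuclideanSpace ℝ (Fin 2)} {s u w : ℝ} (hs : 0 ≤ s)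
    (hsu : s < u) (hb : IsBounded (f '' Icc 0 u)) (hinc : ∀ v ∈ Ioc s u, ‖f v - f s‖ ≤ w) :
    ‖Gam β f u - Gam β f s‖ ≤ 3 * w := by
  have hfu := hinc u ⟨hsu, le_rfl⟩
  have hg := abs_gmap_sub_le β hs hsu.le ((norm_nonneg _).trans hfu) hb hinc
  have he1 : ‖e1‖ = 1 := by simp [e1]
  calc ‖Gam β f u - Gam β f s‖ = ‖(f u - f s) - (gmap β f u - gmap β f s) • e1‖ := by
        rw [Gam, Gam, sub_smul]; abel_nf
    _ ≤ ‖f u - f s‖ + |gmap β f u - gmap β f s| * ‖e1‖ := by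
        rw [← Real.norm_eq_abs, ← norm_smul]; exact norm_sub_le _ _
    _ ≤ 3 * w := by rw [he1]; linarith

theorem gamma_modulus_general (β T : ℝ) :
    ∃ C : ℝ, 0 < C ∧ ∀ f : ℝ → EuclideanSpace ℝ (Fin 2), IsCadlagOn f T →
      ∀ θ : ℝ, 0 < θ → θ ≤ T →
      sSup {x : ℝ | ∃ s u : ℝ, 0 ≤ s ∧ s < u ∧ u ≤ s + θ ∧ s + θ ≤ T ∧
          x = ‖Gam β f u - Gam β f s‖} ≤
        C * sSup {x : ℝ | ∃ s u : ℝ, 0 ≤ s ∧ s < u ∧ u ≤ s + θ ∧ s + θ ≤ T ∧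
          x = ‖f u - f s‖} := by
  refine ⟨3, three_pos, fun f hf θ _ _ => ?_⟩
  change modulusOfContinuity (Gam β f) T θ ≤ 3 * modulusOfContinuity f T θ
  have hb := hf.isBounded_image
  have hw : 0 ≤ 3 * modulusOfContinuity f T θ := mul_nonneg zero_le_three modulusOfContinuity_nonneg
  refine modulusOfContinuity_le hw fun s u hs hsu hu hθ => norm_Gam_sub_le β hs hsu ?_ ?_
  · exact hb.subset (image_mono (Icc_subset_Icc_right (by linarith)))
  · exact fun v hv => norm_sub_le_modulusOfContinuity hb hs hv.1 (by linarith [hv.2]) hθ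

/-- There is a constant `C` bounding the modulus of continuity of `Γ(f)` by that of `f`. -/
theorem gamma_modulus (β T : ℝ) (hβ : 0 < β) (hT : 0 < T) :
    ∃ C : ℝ, 0 < C ∧ ∀ f : ℝ → EuclideanSpace ℝ (Fin 2), IsCadlagOn f T →
      ∀ θ : ℝ, 0 < θ → θ ≤ T →
      sSup {x : ℝ | ∃ s u : ℝ, 0 ≤ s ∧ s < u ∧ u ≤ s + θ ∧ s + θ ≤ T ∧
          x = ‖Gam β f u - Gam β f s‖} ≤
        C * sSup {x : ℝ | ∃ s u : ℝ, 0 ≤ s ∧ s < u ∧ u ≤ s + θ ∧ s + θ ≤ T ∧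
          x = ‖f u - f s‖} :=
  gamma_modulus_general β T
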